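/- arXiv:1410.8381 — 5 statements merged into one kernel-verified Lean document; each statement's English description precedes it below -/
import Mathlib

section
/- The set Λ_M of roots of the Carlitz polynomial [M](x) in a separable closure of F_p(t) forms an F_p[t]-module under the Carlitz action N·λ = [N](λ), and this module is isomorphic to F_p[t]/(M) when M is nonzero; in particular Λ_M is a free F_p[t]/(M)-module of rank 1. -/
open Polynomial

/-- The image of `F_p[t]` in an extension `L` of `F_p(t)`. -/
noncomputable def carlitzMap (p : ℕ) [Fact p.Prime] (L : Type*) [Field L]
    [Algebra (RatFunc (ZMod p)) L] : Polynomial (ZMod p) →+* L :=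
  (algebraMap (RatFunc (ZMod p)) L).comp (algebraMap (Polynomial (ZMod p)) (RatFunc (ZMod p)))

/-- The basic Carlitz operator `[t](x) = x^p + t·x`. -/
noncomputable def carlitzT (p : ℕ) [Fact p.Prime] (L : Type*) [Field L]
    [Algebra (RatFunc (ZMod p)) L] (x : L) : L :=
  x ^ p + carlitzMap p L X * x

/-- The Carlitz polynomial action: `[M](x)`, defined by `[t^n](x) = [t]([t^{n-1}](x))`
and `F_p`-linear extension in `M`. -/
noncomputable def carlitz (p : ℕ) [Fact p.Prime] (L : Type*) [Field L]
    [Algebra (RatFunc (ZMod p)) L] (M : Polynomial (ZMod p)) (x : L) : L :=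
  ∑ i ∈ M.support, carlitzMap p L (C (M.coeff i)) * (carlitzT p L)^[i] x

/-!
The Carlitz action of `N ∈ 𝔽_p[t]` is `aeval` at `N` of the `𝔽_p`-linear map `x ↦ x ^ p + t x`,
so it makes the algebraic closure `L` of `𝔽_p(t)` an `𝔽_p[t]`-module (`Module.AEval'`) whose
`M`-torsion is `Λ_M`. Over `𝔽_p(t)`, `[M](x)` is a polynomial of degree `p ^ deg M` whose
derivative is the nonzero constant `M`; hence it is separable, its roots lie in the separable
closure, and `#Λ_M = p ^ deg M = #(𝔽_p[t]/(M))`.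

A finite module over a PID has an element whose annihilator is that of the whole module. If `D`
generates the annihilator of `Λ_M`, then `Λ_M ⊆ Λ_D` gives `#Λ_M ≤ #Λ_D = #(𝔽_p[t]/(D))`, so the
injection `𝔽_p[t]/(D) → Λ_M` through such an element is bijective, and since `(M) ⊆ (D)` have
quotients of the same size, `(D) = (M)`.
-/

theorem LinearMap.apply_aeval_of_comp_eq {R V W : Type*} [CommSemiring R] [AddCommMonoid V]
    [Module R V] [AddCommMonoid W] [Module R W] {f : V →ₗ[R] W} {S : Module.End R V}
    {T : Module.End R W} (h : T ∘ₗ f = f ∘ₗ S) (P : R[X]) (v : V) :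
    f (aeval S P v) = aeval T P (f v) := by
  induction P using Polynomial.induction_on' with
  | add P Q hP hQ => simp only [map_add, LinearMap.add_apply, hP, hQ]
  | monomial n a =>
    simp only [aeval_monomial, Module.End.mul_apply, Module.algebraMap_end_apply, map_smul]
    rw [← LinearMap.comp_apply, ← Module.End.commute_pow_left_of_commute h n, LinearMap.comp_apply]

theorem Module.nonempty_quotient_equiv_of_annihilator_eq {R N : Type*} [CommRing R]
    [IsDomain R] [IsPrincipalIdealRing R] [AddCommGroup N] [Module R N] [Finite N] {I : Ideal R}
    (hI : Module.annihilator R N = I) (h : Nat.card N ≤ Nat.card (R ⧸ I)) :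
    Nonempty ((R ⧸ I) ≃ₗ[R] N) := by
  subst hI
  obtain ⟨x, hx⟩ := Module.exists_ker_toSpanSingleton_eq_annihilator R N
  let f := (Module.annihilator R N).liftQ (LinearMap.toSpanSingleton R N x) hx.ge
  have hf : Function.Injective f :=
    LinearMap.ker_eq_bot.mp (Submodule.ker_liftQ_eq_bot' _ _ hx.symm)
  exact ⟨LinearEquiv.ofBijective f (hf.bijective_of_nat_card_le h)⟩

theorem Ideal.eq_of_le_of_natCard_quotient_le {R : Type*} [CommRing R] {I J : Ideal R}
    [Finite (R ⧸ I)] (hIJ : I ≤ J) (h : Nat.card (R ⧸ I) ≤ Nat.card (R ⧸ J)) : I = J := by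
  have hinj : Function.Injective (Ideal.Quotient.factor hIJ) :=
    ((Ideal.Quotient.factor_surjective hIJ).bijective_of_nat_card_le h).1
  refine le_antisymm hIJ fun x hx => ?_
  rw [← Ideal.Quotient.eq_zero_iff_mem] at hx ⊢
  exact hinj (by rwa [Ideal.Quotient.factor_mk, map_zero])

theorem Polynomial.natCard_quotient_span_singleton {F : Type*} [Field F] {P : F[X]}
    (hP : P ≠ 0) : Nat.card (F[X] ⧸ Ideal.span {P}) = Nat.card F ^ P.natDegree := by
  change Nat.card (AdjoinRoot P) = _
  rw [Nat.card_congr (AdjoinRoot.powerBasis hP).basis.equivFun.toEquiv, Nat.card_fun,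
    Nat.card_eq_fintype_card (α := Fin _), Fintype.card_fin, AdjoinRoot.powerBasis_dim hP]

theorem Polynomial.Monic.pow_add_C_mul {R : Type*} [CommRing R] {q : R[X]} (hq : q.Monic)
    (hdeg : 0 < q.natDegree) {n : ℕ} (hn : 1 < n) (c : R) :
    (q ^ n + C c * q).Monic ∧ (q ^ n + C c * q).natDegree = n * q.natDegree := by
  nontriviality R
  have hqn : (q ^ n).natDegree = n * q.natDegree := hq.natDegree_pow n
  have hlt : (C c * q).degree < (q ^ n).degree := by
    refine degree_lt_degree ((natDegree_C_mul_le c q).trans_lt ?_)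
    rw [hqn]
    exact lt_mul_left hdeg hn
  exact ⟨(hq.pow n).add_of_left hlt, by rw [natDegree_add_eq_left_of_degree_lt hlt, hqn]⟩

section CarlitzStep

variable (p : ℕ) {S : Type*} [CommRing S] [Module (ZMod p) S] [ExpChar S p]

noncomputable def carlitzStep (τ : S) : Module.End (ZMod p) S :=
  ((frobenius S p).toAddMonoidHom + AddMonoidHom.mulLeft τ).toZModLinearMap p

@[simp]
theorem carlitzStep_apply (τ x : S) : carlitzStep p τ x = x ^ p + τ * x := rfl

theorem map_aeval_carlitzStep {S' : Type*} [CommRing S'] [Module (ZMod p) S'] [ExpChar S' p]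
    (f : S →+* S') (τ : S) (P : (ZMod p)[X]) (x : S) :
    f (aeval (carlitzStep p τ) P x) = aeval (carlitzStep p (f τ)) P (f x) :=
  LinearMap.apply_aeval_of_comp_eq (f := f.toAddMonoidHom.toZModLinearMap p)
    (LinearMap.ext fun y => by simp) P x

end CarlitzStep

theorem derivative_aeval_carlitzStep (p : ℕ) [Fact p.Prime] {R : Type*} [CommRing R]
    [Algebra (ZMod p) R] [CharP R p] (c : R) (P : (ZMod p)[X]) (q : R[X]) :
    derivative (aeval (carlitzStep p (C c)) P q) = C (aeval c P) * derivative q := by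
  -- `derivative` kills `y ^ p`, so it intertwines `carlitzStep p (C c)` with `C c * ·`.
  have h := LinearMap.apply_aeval_of_comp_eq
    (f := (derivative : R[X] →ₗ[R] R[X]).toAddMonoidHom.toZModLinearMap p)
    (S := carlitzStep p (C c)) (T := Algebra.lmul (ZMod p) R[X] (C c))
    (LinearMap.ext fun y => by simp [derivative_pow, CharP.cast_eq_zero]) P q
  have hC : aeval (C c) P = C (aeval c P) := by
    rw [← algebraMap_eq, aeval_algebraMap_apply]
  rw [aeval_algHom_apply, hC] at h
  simpa using h

theorem monic_carlitzStep_iterate_X (p : ℕ) [Fact p.Prime] {R : Type*} [CommRing R]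
    [Nontrivial R] [Algebra (ZMod p) R] [CharP R p] (c : R) (i : ℕ) :
    ((carlitzStep p (C c))^[i] X).Monic ∧ ((carlitzStep p (C c))^[i] X).natDegree = p ^ i := by
  induction i with
  | zero => exact ⟨monic_X, natDegree_X⟩
  | succ i ih =>
    rw [Function.iterate_succ_apply', carlitzStep_apply, pow_succ', ← ih.2]
    exact ih.1.pow_add_C_mul (ih.2 ▸ pow_pos (Fact.out : p.Prime).pos i)
      (Fact.out : p.Prime).one_lt _

section CarlitzModule

variable (p : ℕ) [Fact p.Prime]

theorem carlitzMap_C (a : ZMod p) :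
    carlitzMap p (AlgebraicClosure (RatFunc (ZMod p))) (C a) = algebraMap (ZMod p) _ a := by
  rw [carlitzMap, RingHom.comp_apply, ← algebraMap_eq, ← IsScalarTower.algebraMap_apply,
    ← IsScalarTower.algebraMap_apply]

theorem carlitz_eq_aeval (M : (ZMod p)[X]) (x : AlgebraicClosure (RatFunc (ZMod p))) :
    carlitz p _ M x = aeval (carlitzStep p (carlitzMap p _ X)) M x := by
  rw [aeval_def, eval₂_eq_sum, Polynomial.sum_def, LinearMap.sum_apply, carlitz]
  refine Finset.sum_congr rfl fun i _ => ?_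
  rw [Module.End.mul_apply, Module.algebraMap_end_apply, Module.End.pow_apply, carlitzMap_C,
    Algebra.smul_def]
  rfl

noncomputable def carlitzPoly (M : (ZMod p)[X]) : (RatFunc (ZMod p))[X] :=
  aeval (carlitzStep p (C (algebraMap (ZMod p)[X] (RatFunc (ZMod p)) X))) M X

theorem aeval_carlitzPoly (M : (ZMod p)[X]) (x : AlgebraicClosure (RatFunc (ZMod p))) :
    aeval x (carlitzPoly p M) = carlitz p _ M x := by
  rw [carlitzPoly, carlitz_eq_aeval]
  have h := map_aeval_carlitzStep p (aeval x).toRingHom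
    (C (algebraMap (ZMod p)[X] (RatFunc (ZMod p)) X)) M X
  simp only [AlgHom.toRingHom_eq_coe, RingHom.coe_coe, aeval_X, aeval_C] at h
  exact h

theorem derivative_carlitzPoly (M : (ZMod p)[X]) :
    derivative (carlitzPoly p M) = C (algebraMap (ZMod p)[X] (RatFunc (ZMod p)) M) := by
  rw [carlitzPoly, derivative_aeval_carlitzStep, derivative_X, mul_one, aeval_algebraMap_apply,
    aeval_X_left_apply]

theorem natDegree_carlitzPoly {M : (ZMod p)[X]} (hM : M ≠ 0) :
    (carlitzPoly p M).natDegree = p ^ M.natDegree := by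
  set T := carlitzStep p (C (algebraMap (ZMod p)[X] (RatFunc (ZMod p)) X))
  have hp : 1 < p := (Fact.out : p.Prime).one_lt
  have hT := monic_carlitzStep_iterate_X p (algebraMap (ZMod p)[X] (RatFunc (ZMod p)) X)
  have hsum : carlitzPoly p M = ∑ i ∈ Finset.range (M.natDegree + 1), M.coeff i • T^[i] X := by
    rw [carlitzPoly, aeval_eq_sum_range, LinearMap.sum_apply]
    simp only [LinearMap.smul_apply, Module.End.pow_apply, T]
  have hsmul : ∀ i, (M.coeff i • T^[i] X).natDegree ≤ p ^ i := fun i =>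
    (natDegree_smul_le _ _).trans (hT i).2.le
  have htop : (M.leadingCoeff • T^[M.natDegree] X).natDegree = p ^ M.natDegree := by
    rw [natDegree_smul_of_smul_regular _ (IsSMulRegular.of_ne_zero (leadingCoeff_ne_zero.2 hM)),
      (hT _).2]
  have htop_ne : M.leadingCoeff • T^[M.natDegree] X ≠ 0 :=
    ne_zero_of_natDegree_gt (htop ▸ pow_pos (by omega) _ : 0 < _)
  rw [hsum, Finset.sum_range_succ, ← leadingCoeff, natDegree_add_eq_right_of_degree_lt, htop]
  refine (degree_sum_le _ _).trans_lt ?_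
  rw [degree_eq_natDegree htop_ne, htop]
  refine (Finset.sup_lt_iff (WithBot.bot_lt_coe _)).2 fun i hi => degree_le_natDegree.trans_lt ?_
  exact_mod_cast (hsmul i).trans_lt (Nat.pow_lt_pow_right hp (Finset.mem_range.1 hi))

theorem separable_carlitzPoly {M : (ZMod p)[X]} (hM : M ≠ 0) : (carlitzPoly p M).Separable := by
  have hm : algebraMap (ZMod p)[X] (RatFunc (ZMod p)) M ≠ 0 :=
    (map_ne_zero_iff _ (IsFractionRing.injective _ _)).2 hM
  refine ⟨0, C (algebraMap (ZMod p)[X] (RatFunc (ZMod p)) M)⁻¹, ?_⟩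
  rw [derivative_carlitzPoly, zero_mul, zero_add, ← C_mul, inv_mul_cancel₀ hm, C_1]

theorem mem_separableClosure_of_carlitz_eq_zero {M : (ZMod p)[X]} (hM : M ≠ 0)
    {x : AlgebraicClosure (RatFunc (ZMod p))} (hx : carlitz p _ M x = 0) :
    x ∈ separableClosure (RatFunc (ZMod p)) (AlgebraicClosure (RatFunc (ZMod p))) :=
  mem_separableClosure_iff.2 <|
    (separable_carlitzPoly p hM).of_dvd (minpoly.dvd _ x (by rw [aeval_carlitzPoly, hx]))

noncomputable abbrev CarlitzModule :=
  Module.AEval' (carlitzStep p (carlitzMap p (AlgebraicClosure (RatFunc (ZMod p))) X))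

theorem smul_of_eq_of_carlitz (N : (ZMod p)[X]) (x : AlgebraicClosure (RatFunc (ZMod p))) :
    N • Module.AEval'.of _ x = (Module.AEval'.of _ (carlitz p _ N x) : CarlitzModule p) := by
  rw [carlitz_eq_aeval]
  rfl

noncomputable def carlitzTorsion (M : (ZMod p)[X]) : Submodule (ZMod p)[X] (CarlitzModule p) :=
  Submodule.torsionBy _ _ M

theorem mem_annihilator_carlitzTorsion (M : (ZMod p)[X]) :
    M ∈ Module.annihilator (ZMod p)[X] (carlitzTorsion p M) :=
  (Module.isTorsionBy_iff_mem_annihilator _ _).1 (Submodule.torsionBy_isTorsionBy M)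

theorem of_mem_carlitzTorsion_iff (M : (ZMod p)[X]) (x : AlgebraicClosure (RatFunc (ZMod p))) :
    Module.AEval'.of _ x ∈ carlitzTorsion p M ↔ carlitz p _ M x = 0 := by
  rw [carlitzTorsion, Submodule.mem_torsionBy_iff, smul_of_eq_of_carlitz,
    LinearEquiv.map_eq_zero_iff]

noncomputable def rootSetEquivCarlitzTorsion {M : (ZMod p)[X]} (hM : M ≠ 0) :
    (carlitzPoly p M).rootSet (AlgebraicClosure (RatFunc (ZMod p))) ≃ carlitzTorsion p M :=
  Equiv.subtypeEquiv (Module.AEval'.of _).toEquiv fun x => by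
    rw [mem_rootSet, aeval_carlitzPoly, LinearEquiv.coe_toEquiv, of_mem_carlitzTorsion_iff]
    exact and_iff_right (separable_carlitzPoly p hM).ne_zero

theorem finite_carlitzTorsion {M : (ZMod p)[X]} (hM : M ≠ 0) : Finite (carlitzTorsion p M) :=
  .of_equiv _ (rootSetEquivCarlitzTorsion p hM)

theorem natCard_carlitzTorsion {M : (ZMod p)[X]} (hM : M ≠ 0) :
    Nat.card (carlitzTorsion p M) = Nat.card ((ZMod p)[X] ⧸ Ideal.span {M}) := by
  rw [← Nat.card_congr (rootSetEquivCarlitzTorsion p hM), Nat.card_eq_fintype_card,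
    card_rootSet_eq_natDegree (separable_carlitzPoly p hM) (IsAlgClosed.splits _),
    natDegree_carlitzPoly p hM, Polynomial.natCard_quotient_span_singleton hM, Nat.card_zmod]

theorem natCard_carlitzTorsion_le {M : (ZMod p)[X]} (hM : M ≠ 0) :
    Nat.card (carlitzTorsion p M) ≤
      Nat.card ((ZMod p)[X] ⧸ Module.annihilator (ZMod p)[X] (carlitzTorsion p M)) := by
  set I := Module.annihilator (ZMod p)[X] (carlitzTorsion p M)
  obtain ⟨D, hD⟩ : ∃ D, I = Ideal.span {D} :=
    ⟨_, (Submodule.IsPrincipal.span_singleton_generator I).symm⟩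
  have hMI : M ∈ I := mem_annihilator_carlitzTorsion p M
  have hD0 : D ≠ 0 := by
    rintro rfl
    rw [hD, Ideal.span_singleton_eq_bot.2 rfl, Ideal.mem_bot] at hMI
    exact hM hMI
  have hDI : D ∈ I := hD ▸ Ideal.mem_span_singleton_self D
  have hDM : Module.IsTorsionBy _ (carlitzTorsion p M) D :=
    (Module.isTorsionBy_iff_mem_annihilator _ _).2 hDI
  have hle : carlitzTorsion p M ≤ carlitzTorsion p D := fun x hx =>
    (Submodule.mem_torsionBy_iff _ _).2 (congrArg Subtype.val (@hDM ⟨x, hx⟩))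
  have := finite_carlitzTorsion p hD0
  rw [hD, ← natCard_carlitzTorsion p hD0]
  exact Nat.card_le_card_of_injective _ (Submodule.inclusion_injective hle)

theorem annihilator_carlitzTorsion {M : (ZMod p)[X]} (hM : M ≠ 0) :
    Module.annihilator (ZMod p)[X] (carlitzTorsion p M) = Ideal.span {M} := by
  have : Finite ((ZMod p)[X] ⧸ Ideal.span {M}) :=
    Nat.finite_of_card_ne_zero <| by
      rw [Polynomial.natCard_quotient_span_singleton hM, Nat.card_zmod]
      exact pow_ne_zero _ (Fact.out : p.Prime).ne_zero
  refine (Ideal.eq_of_le_of_natCard_quotient_le ?_ ?_).symm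
  · exact (Ideal.span_singleton_le_iff_mem _).2 (mem_annihilator_carlitzTorsion p M)
  · rw [← natCard_carlitzTorsion p hM]
    exact natCard_carlitzTorsion_le p hM

theorem nonempty_quotient_equiv_carlitzTorsion {M : (ZMod p)[X]} (hM : M ≠ 0) :
    Nonempty (((ZMod p)[X] ⧸ Ideal.span {M}) ≃ₗ[(ZMod p)[X]] carlitzTorsion p M) := by
  have := finite_carlitzTorsion p hM
  exact Module.nonempty_quotient_equiv_of_annihilator_eq (N := carlitzTorsion p M)
    (annihilator_carlitzTorsion p hM) (natCard_carlitzTorsion p hM).le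

end CarlitzModule

/-- the set `Λ_M` of roots of the Carlitz polynomial `[M](x)` in a separable
closure of `F_p(t)` is an `F_p[t]`-module under the Carlitz action `N·λ = [N](λ)`,
isomorphic to `F_p[t]/(M)` for nonzero `M`; in particular it is free of rank 1 over
`F_p[t]/(M)`. -/
theorem carlitz_torsion_module_iso (p : ℕ) [Fact p.Prime] (M : Polynomial (ZMod p))
    (hM : M ≠ 0) :
    ∀ Λ : Set (AlgebraicClosure (RatFunc (ZMod p))),
      Λ = {l | l ∈ separableClosure (RatFunc (ZMod p)) (AlgebraicClosure (RatFunc (ZMod p))) ∧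
              carlitz p (AlgebraicClosure (RatFunc (ZMod p))) M l = 0} →
      (∀ α β, α ∈ Λ → β ∈ Λ → α + β ∈ Λ) ∧
      (∀ (N : Polynomial (ZMod p)) (α), α ∈ Λ →
          carlitz p (AlgebraicClosure (RatFunc (ZMod p))) N α ∈ Λ) ∧
      ∃ e : Λ → Polynomial (ZMod p) ⧸ Ideal.span {M},
        Function.Bijective e ∧
        (∀ (α β : AlgebraicClosure (RatFunc (ZMod p))) (hα : α ∈ Λ) (hβ : β ∈ Λ)
            (hab : α + β ∈ Λ), e ⟨α + β, hab⟩ = e ⟨α, hα⟩ + e ⟨β, hβ⟩) ∧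
        (∀ (N : Polynomial (ZMod p)) (α : AlgebraicClosure (RatFunc (ZMod p)))
            (hα : α ∈ Λ)
            (hNα : carlitz p (AlgebraicClosure (RatFunc (ZMod p))) N α ∈ Λ),
          e ⟨carlitz p (AlgebraicClosure (RatFunc (ZMod p))) N α, hNα⟩ =
            Ideal.Quotient.mk (Ideal.span {M}) N * e ⟨α, hα⟩) := by
  rintro Λ rfl
  have hmem : ∀ x, x ∈ {l | l ∈ separableClosure _ _ ∧ carlitz p _ M l = 0} ↔
      Module.AEval'.of _ x ∈ carlitzTorsion p M := fun x => by
    rw [of_mem_carlitzTorsion_iff]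
    exact ⟨And.right, fun hx => ⟨mem_separableClosure_of_carlitz_eq_zero p hM hx, hx⟩⟩
  obtain ⟨E⟩ := nonempty_quotient_equiv_carlitzTorsion p hM
  let σ := Equiv.subtypeEquiv (Module.AEval'.of _).toEquiv hmem
  refine ⟨fun α β hα hβ => (hmem _).2 ?_, fun N α hα => (hmem _).2 ?_, E.symm ∘ σ,
    (σ.trans E.symm.toEquiv).bijective, fun α β hα hβ hab => ?_, fun N α hα hNα => ?_⟩
  · rw [map_add]
    exact add_mem ((hmem α).1 hα) ((hmem β).1 hβ)
  · rw [← smul_of_eq_of_carlitz]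
    exact Submodule.smul_mem _ N ((hmem α).1 hα)
  · have : σ ⟨α + β, hab⟩ = σ ⟨α, hα⟩ + σ ⟨β, hβ⟩ :=
      Subtype.ext (map_add (Module.AEval'.of _) α β)
    rw [Function.comp_apply, this, map_add]
    rfl
  · have : σ ⟨carlitz p _ N α, hNα⟩ = N • σ ⟨α, hα⟩ :=
      Subtype.ext (smul_of_eq_of_carlitz p N α).symm
    rw [Function.comp_apply, this, map_smul]
    exact Algebra.smul_def (A := (ZMod p)[X] ⧸ Ideal.span {M}) N _
end

section
/- Let G be a finite abelian group of order coprime to p, with minimal number of generators d. Then G is isomorphic to a quotient of a direct product (F_p[t]/M_1)^× × ⋯ × (F_p[t]/M_d)^× for some pairwise distinct monic irreducible polynomials M_1, …, M_d ∈ F_p[t]. -/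
/-!
Let `N = |G|` and `g₁, …, g_d` generate `G`. Take `Mᵢ` irreducible of degree `i · φ(N)`; these
are distinct, and `(F_p[t]/Mᵢ)^×` is cyclic of order `p^(i · φ(N)) - 1`, which `N` divides by
Euler's theorem. So a generator of the `i`-th factor can be sent to `gᵢ`, and the product of these
maps (`G` is abelian) hits every generator of `G`.
-/

open Polynomial

theorem FiniteField.exists_monic_irreducible_natDegree_eq (K : Type*) [Field K] [Finite K]
    {n : ℕ} (hn : n ≠ 0) : ∃ M : K[X], M.Monic ∧ Irreducible M ∧ M.natDegree = n := by
  obtain ⟨p, _⟩ := CharP.exists K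
  have : Fact p.Prime := ⟨CharP.char_is_prime K p⟩
  have : NeZero n := ⟨hn⟩
  obtain ⟨α, hα⟩ := Field.exists_primitive_element_of_finite_top K (Extension K p n)
  have hα_int : IsIntegral K α := .of_finite K α
  refine ⟨minpoly K α, minpoly.monic hα_int, minpoly.irreducible hα_int, ?_⟩
  rw [← IntermediateField.adjoin.finrank hα_int, hα, IntermediateField.finrank_top',
    finrank_extension]

theorem Nat.dvd_pow_mul_totient_sub_one {n p : ℕ} (h : p.Coprime n) (k : ℕ) :
    n ∣ p ^ (k * n.totient) - 1 := by
  apply Nat.dvd_of_mod_eq_zero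
  apply Nat.sub_mod_eq_zero_of_mod_eq
  rw [mul_comm, pow_mul]
  have := (Nat.ModEq.pow_totient h).pow k
  rwa [one_pow] at this

theorem Group.exists_fin_rank_closure_range_eq_top (G : Type*) [Group G] [FG G] :
    ∃ g : Fin (rank G) → G, Subgroup.closure (Set.range g) = ⊤ := by
  obtain ⟨S, hcard, hS⟩ := rank_spec G
  refine ⟨(↑) ∘ (S.equivFinOfCardEq hcard).symm, ?_⟩
  rw [← hS, EquivLike.range_comp, Subtype.range_coe]

theorem IsCyclic.exists_monoidHom_mem_range {H G : Type*} [Group H] [Finite H] [IsCyclic H]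
    [Group G] {g : G} (hg : orderOf g ∣ Nat.card H) : ∃ φ : H →* G, g ∈ Set.range φ := by
  obtain ⟨h, hh⟩ := IsCyclic.exists_generator (α := H)
  rw [← orderOf_eq_card_of_forall_mem_zpowers hh] at hg
  exact ⟨monoidHomOfForallMemZpowers hh hg, h, monoidHomOfForallMemZpowers_apply_gen hh hg⟩

theorem CommGroup.exists_surjective_pi_of_closure_range_eq_top {ι : Type*} [Fintype ι]
    [DecidableEq ι] {H : ι → Type*} [∀ i, Group (H i)] {G : Type*} [CommGroup G]
    {g : ι → G} (hg : Subgroup.closure (Set.range g) = ⊤) (φ : ∀ i, H i →* G)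
    (hφ : ∀ i, g i ∈ Set.range (φ i)) :
    ∃ ψ : (∀ i, H i) →* G, Function.Surjective ψ := by
  refine ⟨MonoidHom.noncommPiCoprod φ (show Pairwise _ from fun _ _ _ _ _ ↦ Commute.all _ _), ?_⟩
  rw [← MonoidHom.range_eq_top, MonoidHom.noncommPiCoprod_range, eq_top_iff, ← hg,
    Subgroup.closure_le]
  rintro _ ⟨i, rfl⟩
  exact Subgroup.mem_iSup_of_mem i (hφ i)

section QuotientSpanIrreducible

variable {K : Type*} [Field K] {M : K[X]}

theorem finite_quotient_span_of_irreducible [Finite K] (hM : Irreducible M) :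
    Finite (K[X] ⧸ Ideal.span {M}) :=
  have := (AdjoinRoot.powerBasis (K := K) hM.ne_zero).finite
  Module.finite_of_finite K (M := AdjoinRoot M)

theorem natCard_quotient_span_of_irreducible (hM : Irreducible M) :
    Nat.card (K[X] ⧸ Ideal.span {M}) = Nat.card K ^ M.natDegree := by
  let pb := AdjoinRoot.powerBasis (K := K) hM.ne_zero
  have : Module.Finite K (AdjoinRoot M) := pb.finite
  rw [← AdjoinRoot.powerBasis_dim hM.ne_zero, ← pb.finrank]
  exact Module.natCard_eq_pow_finrank (K := K) (V := AdjoinRoot M)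

theorem isCyclic_units_quotient_span_of_irreducible [Finite K] (hM : Irreducible M) :
    IsCyclic (K[X] ⧸ Ideal.span {M})ˣ :=
  have : Fact (Irreducible M) := ⟨hM⟩
  have : Finite (AdjoinRoot M) := finite_quotient_span_of_irreducible hM
  inferInstanceAs (IsCyclic (AdjoinRoot M)ˣ)

theorem natCard_units_quotient_span_of_irreducible (hM : Irreducible M) :
    Nat.card (K[X] ⧸ Ideal.span {M})ˣ = Nat.card K ^ M.natDegree - 1 := by
  have : Fact (Irreducible M) := ⟨hM⟩
  rw [← natCard_quotient_span_of_irreducible hM]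
  exact Nat.card_units (AdjoinRoot M)

end QuotientSpanIrreducible

/-- a finite abelian group `G` of order coprime to `p` with minimal number of
generators `d` is a quotient of a product `(F_p[t]/M₁)^× × ⋯ × (F_p[t]/M_d)^×` for some
pairwise distinct monic irreducible `M_i`. -/
theorem abelian_group_quotient_of_units_product (p : ℕ) [Fact p.Prime]
    (G : Type*) [CommGroup G] [Fintype G] (hcop : Nat.Coprime (Fintype.card G) p) :
    ∃ M : Fin (Group.rank G) → Polynomial (ZMod p),
      (∀ i, (M i).Monic ∧ Irreducible (M i)) ∧ Function.Injective M ∧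
      ∃ φ : (∀ i, (Polynomial (ZMod p) ⧸ Ideal.span {M i})ˣ) →* G,
        Function.Surjective φ := by
  have htot : (Fintype.card G).totient ≠ 0 := (Nat.totient_pos.mpr Fintype.card_pos).ne'
  choose M hmonic hirr hdeg using fun i : Fin (Group.rank G) ↦
    FiniteField.exists_monic_irreducible_natDegree_eq (ZMod p)
      (mul_ne_zero (Nat.succ_ne_zero i) htot)
  have hinj : Function.Injective M := fun i j hij ↦ by
    have := congrArg natDegree hij
    rw [hdeg, hdeg, Nat.mul_left_inj htot] at this
    exact Fin.ext (by simpa using this)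
  refine ⟨M, fun i ↦ ⟨hmonic i, hirr i⟩, hinj, ?_⟩
  obtain ⟨g, hg⟩ := Group.exists_fin_rank_closure_range_eq_top G
  have hφ (i) : ∃ φ : ((ZMod p)[X] ⧸ Ideal.span {M i})ˣ →* G, g i ∈ Set.range φ := by
    have := finite_quotient_span_of_irreducible (hirr i)
    have := isCyclic_units_quotient_span_of_irreducible (hirr i)
    apply IsCyclic.exists_monoidHom_mem_range
    rw [natCard_units_quotient_span_of_irreducible (hirr i), Nat.card_zmod, hdeg]
    exact orderOf_dvd_card.trans (Nat.dvd_pow_mul_totient_sub_one hcop.symm _)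
  choose φ hφ using hφ
  exact CommGroup.exists_surjective_pi_of_closure_range_eq_top hg φ hφ
end

section
/- Let p > 3 and let u ∈ F_p be a nonzero constant and w ∈ F_p[t] nonconstant with π = 4w³ − 27u irreducible in F_p[t]. Then f(x) = x³ − uwx − u² is irreducible over F_p(t). -/
open Polynomial

/-- for `p > 3`, `u ∈ F_p` nonzero, `w ∈ F_p[t]` nonconstant with
`4w³ - 27u` irreducible, the cubic `x³ - uwx - u²` is irreducible over `F_p(t)`. -/
theorem cubic_irreducible (p : ℕ) [Fact p.Prime] (hp : 3 < p)
    (u : ZMod p) (hu : u ≠ 0) (w : Polynomial (ZMod p)) (hw : 0 < w.natDegree)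
    (hpi : Irreducible (4 * w ^ 3 - 27 * C u)) :
    Irreducible
      (X ^ 3 - C (algebraMap (Polynomial (ZMod p)) (RatFunc (ZMod p)) (C u * w)) * X -
        C (algebraMap (Polynomial (ZMod p)) (RatFunc (ZMod p)) (C (u ^ 2))) :
        Polynomial (RatFunc (ZMod p))) := by
  set K := RatFunc (ZMod p)
  set φ := algebraMap (Polynomial (ZMod p)) K
  set a : K := φ (C u * w) with ha
  set b : K := φ (C (u ^ 2)) with hb
  set f : Polynomial K := X ^ 3 - C a * X - C b with hf
  have hmonic : f.Monic := by
    rw [hf]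
    monicity!
  have hdeg : f.natDegree = 3 := by
    rw [hf]
    compute_degree!
  rw [hmonic.irreducible_iff_roots_eq_zero_of_degree_le_three (by omega) (by omega)]
  by_contra hroots
  obtain ⟨r, hr⟩ := Multiset.exists_mem_of_ne_zero hroots
  have hr0 : f.eval r = 0 := (mem_roots hmonic.ne_zero).mp hr
  -- r is integral over F_p[t]
  have hint : IsIntegral (Polynomial (ZMod p)) r := by
    refine ⟨X ^ 3 - C (C u * w) * X - C (C (u ^ 2)), ?_, ?_⟩
    · monicity!
    · have : (X ^ 3 - C (C u * w) * X - C (C (u ^ 2)) : Polynomial (Polynomial (ZMod p))).eval₂ φ r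
          = f.eval r := by
        simp [hf, eval₂_sub, eval₂_mul, eval₂_pow, ha, hb]
      simpa [Polynomial.eval₂_eq_eval_map] using this.trans hr0
  obtain ⟨s, hs⟩ := IsIntegrallyClosed.isIntegral_iff.mp hint
  -- transfer the root equation to F_p[t]
  have hinj : Function.Injective φ := IsFractionRing.injective _ _
  have hseq : s ^ 3 - C u * w * s - C (u ^ 2) = 0 := by
    apply hinj
    rw [map_zero]
    push_cast [map_sub, map_mul, map_pow]
    rw [hs]
    simpa [hf, ha, hb] using hr0
  have hsne : s ≠ 0 := by
    rintro rfl
    have h2 : u ^ 2 = 0 := by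
      have hC : C (u ^ 2) = (0 : Polynomial (ZMod p)) := by linear_combination -hseq
      exact C_eq_zero.mp hC
    exact hu (pow_eq_zero_iff two_ne_zero |>.mp h2)
  have hdvd : s ∣ C (u ^ 2) := ⟨s ^ 2 - C u * w, by linear_combination -hseq⟩
  have hsdeg : s.natDegree = 0 := by
    have := natDegree_le_of_dvd hdvd (by simp [pow_eq_zero_iff, hu])
    simpa using this
  obtain ⟨c, rfl⟩ := natDegree_eq_zero.mp hsdeg
  have hc0 : c ≠ 0 := fun h => hsne (by simp [h])
  have hceq : w * (C u * C c) = C c ^ 3 - C (u ^ 2) := by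
    linear_combination -hseq
  rw [← C_mul, ← C_pow, ← C_sub] at hceq
  have hwne : w ≠ 0 := fun h => by simp [h] at hw
  have : (w * C (u * c)).natDegree = w.natDegree := by
    rw [natDegree_mul hwne (by simp [hu, hc0]), natDegree_C, add_zero]
  rw [hceq, natDegree_C] at this
  omega
end

section
/- The Artin–Schreier map ℘(x) = x^p − x on F_p(t) is an additive group homomorphism whose kernel is F_p, and the polynomials t^n for n ≥ 1 with p ∤ n represent F_p-linearly independent classes in F_p(t)/℘(F_p(t)); hence dim_{F_p} F_p(t)/℘(F_p(t)) is infinite. -/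
/-- The Artin–Schreier additive homomorphism `℘(x) = x^p - x` on a field of
characteristic `p`. -/
def artinSchreier (p : ℕ) [Fact p.Prime] (K : Type*) [Field K] [CharP K p] : K →+ K where
  toFun x := x ^ p - x
  map_zero' := by
    simp [zero_pow (Fact.out : p.Prime).ne_zero]
  map_add' x y := by
    show (x + y) ^ p - (x + y) = (x ^ p - x) + (y ^ p - y)
    rw [add_pow_char (R := K) x y]
    ring

instance (p : ℕ) [Fact p.Prime] : CharP (RatFunc (ZMod p)) p :=
  charP_of_injective_algebraMap (algebraMap (ZMod p) (RatFunc (ZMod p))).injective p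

/-!
The fixed points of Frobenius in a field of characteristic `p` form the prime field, which gives
the kernel. If `y ^ p - y = P` for a polynomial `P`, then `y` is integral over the integrally
closed ring `F_p[t]`, hence is itself a polynomial `q`; for nonconstant `q` the degree of
`q ^ p - q` is `p * deg q`, so the leading coefficient of `P` sits in a degree divisible by `p`.
Hence a polynomial with no monomials in degrees divisible by `p` lies in `℘(F_p(t))` only if it
is zero, and in particular the classes of the `t ^ (m * p + 1)` are pairwise distinct.
-/

open Polynomial

@[simp]
theorem artinSchreier_apply (p : ℕ) [Fact p.Prime] (K : Type*) [Field K] [CharP K p] (x : K) :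
    artinSchreier p K x = x ^ p - x :=
  rfl

theorem pow_eq_self_iff_mem_range_algebraMap {p : ℕ} [Fact p.Prime] {K : Type*} [Field K]
    [CharP K p] [Algebra (ZMod p) K] {x : K} :
    x ^ p = x ↔ x ∈ Set.range (algebraMap (ZMod p) K) := by
  rw [← Subfield.mem_bot_iff_pow_eq_self K p, ← ZMod.fieldRange_castHom_eq_bot p,
    Subsingleton.elim (ZMod.castHom dvd_rfl K) (algebraMap (ZMod p) K)]
  rfl

namespace Polynomial

variable {R : Type*} [CommRing R] [NoZeroDivisors R] {p : ℕ}

theorem dvd_natDegree_pow_sub_self (hp : 1 < p) (q : R[X]) : p ∣ (q ^ p - q).natDegree := by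
  obtain hq | hq := Nat.eq_zero_or_pos q.natDegree
  · rw [eq_C_of_natDegree_eq_zero hq, ← C_pow, ← C_sub, natDegree_C]
    exact dvd_zero p
  · have hlt : q.natDegree < (q ^ p).natDegree := by
      rw [natDegree_pow]
      exact lt_mul_left hq hp
    rw [natDegree_sub_eq_left_of_natDegree_lt hlt, natDegree_pow]
    exact dvd_mul_right p _

theorem eq_zero_of_pow_sub_self_eq (hp : 1 < p) {q P : R[X]} (hP : ∀ n, p ∣ n → P.coeff n = 0)
    (h : q ^ p - q = P) : P = 0 := by
  rw [← leadingCoeff_eq_zero]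
  exact hP _ (h ▸ dvd_natDegree_pow_sub_self hp q)

theorem coeff_sum_support_C_mul_X_pow {S : Type*} [Semiring S] (c : ℕ →₀ S) (m : ℕ) :
    (∑ n ∈ c.support, C (c n) * X ^ n).coeff m = c m := by
  simp

end Polynomial

theorem IsIntegrallyClosed.exists_algebraMap_eq_of_pow_sub_self_eq {R K : Type*} [CommRing R]
    [IsIntegrallyClosed R] [CommRing K] [Algebra R K] [IsFractionRing R K] {p : ℕ} (hp : 1 < p)
    {y : K} {r : R} (h : y ^ p - y = algebraMap R K r) : ∃ q : R, algebraMap R K q = y := by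
  refine IsIntegrallyClosed.algebraMap_eq_of_integral ⟨X ^ p - (X + C r), ?_, ?_⟩
  · refine monic_X_pow_sub ((degree_add_le _ _).trans_lt (max_lt ?_ ?_))
    · exact degree_X_le.trans_lt (by exact_mod_cast hp)
    · exact degree_C_le.trans_lt (by exact_mod_cast zero_lt_one.trans hp)
  · simp [eval₂_sub, ← h]

namespace RatFunc

variable {k : Type*} [Field k] {p : ℕ}

theorem eq_zero_of_pow_sub_self_eq_algebraMap (hp : 1 < p) {P : k[X]}
    (hP : ∀ n, p ∣ n → P.coeff n = 0) {y : RatFunc k}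
    (h : y ^ p - y = algebraMap k[X] (RatFunc k) P) : P = 0 := by
  obtain ⟨q, rfl⟩ := IsIntegrallyClosed.exists_algebraMap_eq_of_pow_sub_self_eq hp h
  refine eq_zero_of_pow_sub_self_eq (q := q) hp hP (IsFractionRing.injective k[X] (RatFunc k) ?_)
  rwa [map_sub, map_pow]

theorem eq_zero_of_pow_sub_self_eq_sum (hp : 1 < p) (c : ℕ →₀ k)
    (hc : ∀ n ∈ c.support, ¬ p ∣ n) {y : RatFunc k}
    (h : y ^ p - y = ∑ n ∈ c.support, algebraMap k (RatFunc k) (c n) * X ^ n) : c = 0 := by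
  set P : k[X] := ∑ n ∈ c.support, Polynomial.C (c n) * Polynomial.X ^ n with hP
  have hmap : algebraMap k[X] (RatFunc k) P =
      ∑ n ∈ c.support, algebraMap k (RatFunc k) (c n) * X ^ n := by
    simp [hP, algebraMap_C, algebraMap_X, algebraMap_eq_C]
  have hcoeff (n : ℕ) (hn : p ∣ n) : P.coeff n = 0 := by
    rw [hP, coeff_sum_support_C_mul_X_pow]
    exact Finsupp.notMem_support_iff.mp fun hmem => hc n hmem hn
  have h0 := eq_zero_of_pow_sub_self_eq_algebraMap hp hcoeff (h.trans hmap.symm)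
  ext m
  simpa [hP] using congrArg (coeff · m) h0

theorem infinite_quotient_range_artinSchreier [Fact p.Prime] [CharP k p] :
    Infinite (RatFunc k ⧸ (artinSchreier p (RatFunc k)).range) := by
  have hp := (Fact.out : p.Prime).one_lt
  have hndvd (m : ℕ) : ¬ p ∣ m * p + 1 := fun hdvd =>
    hp.ne' (Nat.dvd_one.mp ((Nat.dvd_add_right (dvd_mul_left p m)).mp hdvd))
  refine Infinite.of_injective (fun m : ℕ => (X ^ (m * p + 1) : RatFunc k)) fun a b hab => ?_
  obtain ⟨y, hy⟩ := QuotientAddGroup.eq_iff_sub_mem.mp hab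
  set P : k[X] := Polynomial.X ^ (a * p + 1) - Polynomial.X ^ (b * p + 1) with hP
  have hcoeff (n : ℕ) (hn : p ∣ n) : P.coeff n = 0 := by
    have ha : n ≠ a * p + 1 := fun h => hndvd a (h ▸ hn)
    have hb : n ≠ b * p + 1 := fun h => hndvd b (h ▸ hn)
    simp [hP, coeff_X_pow, ha, hb]
  have h0 := eq_zero_of_pow_sub_self_eq_algebraMap hp hcoeff (y := y)
    (by simpa [hP, algebraMap_X] using hy)
  have hdeg := congrArg natDegree (sub_eq_zero.mp h0)
  simp only [natDegree_X_pow, add_left_inj] at hdeg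
  exact Nat.eq_of_mul_eq_mul_right (zero_lt_one.trans hp) hdeg

end RatFunc

/-- the Artin–Schreier map `℘(x) = x^p - x` on `F_p(t)` has kernel `F_p`,
the classes of `t^n` (for `n ≥ 1`, `p ∤ n`) are `F_p`-linearly independent in
`F_p(t)/℘(F_p(t))`, and hence this quotient is infinite-dimensional over `F_p`. -/
theorem artinSchreier_kernel_and_independence (p : ℕ) [Fact p.Prime] :
    (∀ x : RatFunc (ZMod p),
        artinSchreier p (RatFunc (ZMod p)) x = 0 ↔
        ∃ c : ZMod p, x = algebraMap (ZMod p) (RatFunc (ZMod p)) c) ∧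
    (∀ c : ℕ →₀ ZMod p, (∀ n ∈ c.support, 1 ≤ n ∧ ¬ p ∣ n) →
        (∑ n ∈ c.support, algebraMap (ZMod p) (RatFunc (ZMod p)) (c n) * RatFunc.X ^ n) ∈
          Set.range (artinSchreier p (RatFunc (ZMod p))) →
        c = 0) ∧
    Infinite (RatFunc (ZMod p) ⧸ (artinSchreier p (RatFunc (ZMod p))).range) := by
  refine ⟨fun x => ?_, fun c hc ⟨y, hy⟩ => ?_, RatFunc.infinite_quotient_range_artinSchreier⟩
  · rw [artinSchreier_apply, sub_eq_zero, pow_eq_self_iff_mem_range_algebraMap]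
    exact exists_congr fun c => eq_comm
  · exact RatFunc.eq_zero_of_pow_sub_self_eq_sum (Fact.out : p.Prime).one_lt c
      (fun n hn => (hc n hn).2) hy
end

section
/- Let p ≡ 1 mod 3, p > 64. Then there exist u ∈ F_p nonzero and a monic polynomial w ∈ F_p[t] of even positive degree such that 4w³ − 27u is irreducible in F_p[t] and the discriminant d = u³(4w³ − 27u) of f(x) = x³ − uwx − u² is not a square in F_p(t). -/
open Polynomial

/-- for `p ≡ 1 mod 3` with `p > 64`, there exist a nonzero constant
`u ∈ F_p` and a monic `w ∈ F_p[t]` of even positive degree with `4w³ - 27u` irreducible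
and the discriminant `u³(4w³ - 27u)` of `x³ - uwx - u²` not a square in `F_p(t)`. -/
theorem exists_good_cubic_parameters (p : ℕ) [Fact p.Prime] (hp3 : p % 3 = 1)
    (hp : 64 < p) :
    ∃ (u : ZMod p) (w : Polynomial (ZMod p)), u ≠ 0 ∧ w.Monic ∧
      Even w.natDegree ∧ 0 < w.natDegree ∧
      Irreducible (4 * w ^ 3 - 27 * C u) ∧
      ¬∃ g : RatFunc (ZMod p),
        g ^ 2 = algebraMap (Polynomial (ZMod p)) (RatFunc (ZMod p))
          (C u ^ 3 * (4 * w ^ 3 - 27 * C u)) := by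
  classical
  obtain ⟨ζ, hζ⟩ := IsCyclic.exists_generator (α := (ZMod p)ˣ)
  have hcard : Fintype.card (ZMod p)ˣ = p - 1 := ZMod.card_units p
  have hord : orderOf ζ = p - 1 := by
    rw [orderOf_eq_card_of_forall_mem_zpowers hζ, Nat.card_eq_fintype_card, hcard]
  set a : ZMod p := (ζ : ZMod p) with ha_def
  have ha0 : a ≠ 0 := Units.ne_zero ζ
  -- a is not a k-th power for k dividing p-1, k ≥ 2
  have key : ∀ (k : ℕ), 2 ≤ k → k ∣ p - 1 → ∀ b : ZMod p, b ^ k ≠ a := by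
    intro k hk2 hkd b hb
    have hb0 : b ≠ 0 := by
      rintro rfl
      rw [zero_pow (by omega)] at hb
      exact ha0 hb.symm
    have hβ : (Units.mk0 b hb0) ^ k = ζ := Units.ext (by simpa using hb)
    have h1 : ζ ^ ((p - 1) / k) = 1 := by
      rw [← hβ, ← pow_mul, Nat.mul_div_cancel' hkd, ← hcard]
      exact pow_card_eq_one
    have hdvd := orderOf_dvd_of_pow_eq_one h1
    rw [hord] at hdvd
    have hkle : k ≤ p - 1 := Nat.le_of_dvd (by omega) hkd
    have hpos : 0 < (p - 1) / k := Nat.div_pos hkle (by omega)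
    have hlt : (p - 1) / k < p - 1 := Nat.div_lt_self (by omega) (by omega)
    exact absurd (Nat.le_of_dvd hpos hdvd) (not_le.mpr hlt)
  have hsq : ∀ b : ZMod p, b ^ 2 ≠ a := key 2 le_rfl (by
    obtain ⟨k, hk⟩ := (Fact.out : p.Prime).odd_of_ne_two (by omega)
    omega)
  have hcu : ∀ b : ZMod p, b ^ 3 ≠ a := key 3 (by omega) (by omega)
  -- X^6 - C a is irreducible
  have h2 : Irreducible (X ^ 2 - C a : (ZMod p)[X]) :=
    X_pow_sub_C_irreducible_of_prime Nat.prime_two hsq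
  have h6 : Irreducible (X ^ 6 - C a : (ZMod p)[X]) := by
    have H := X_pow_mul_sub_C_irreducible (n := 3) (m := 2) h2 ?_
    · simpa using H
    · intro E _ _ x hx
      have hint : IsIntegral (ZMod p) x := by
        by_contra h
        rw [minpoly.eq_zero h] at hx
        exact X_pow_sub_C_ne_zero two_pos a hx.symm
      apply X_pow_sub_C_irreducible_of_prime Nat.prime_three
      intro b hb
      have hnorm : (Algebra.norm (ZMod p) b) ^ 3 = -a := by
        rw [← map_pow, hb, ← IntermediateField.adjoin.powerBasis_gen hint,
          Algebra.PowerBasis.norm_gen_eq_coeff_zero_minpoly]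
        simp [IntermediateField.adjoin.powerBasis_dim, IntermediateField.minpoly_gen, hx]
      exact hcu (-(Algebra.norm (ZMod p) b))
        (by rw [Odd.neg_pow ⟨1, by norm_num⟩, hnorm, neg_neg])
  -- the parameters
  have h27 : (27 : ZMod p) ≠ 0 := by
    have h : ((27 : ℕ) : ZMod p) ≠ 0 := by
      rw [Ne, ZMod.natCast_eq_zero_iff]
      intro h; exact absurd (Nat.le_of_dvd (by norm_num) h) (by omega)
    simpa using h
  have h4 : (4 : ZMod p) ≠ 0 := by
    have h : ((4 : ℕ) : ZMod p) ≠ 0 := by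
      rw [Ne, ZMod.natCast_eq_zero_iff]
      intro h; exact absurd (Nat.le_of_dvd (by norm_num) h) (by omega)
    simpa using h
  set u : ZMod p := 27⁻¹ * (4 * a) with hu_def
  have hu0 : u ≠ 0 := mul_ne_zero (inv_ne_zero h27) (mul_ne_zero h4 ha0)
  have h27u : (27 : ZMod p) * u = 4 * a := by
    rw [hu_def, ← mul_assoc, mul_inv_cancel₀ h27, one_mul]
  have heq : 4 * (X ^ 2 : (ZMod p)[X]) ^ 3 - 27 * C u = C 4 * (X ^ 6 - C a) := by
    have h1 : (27 : (ZMod p)[X]) * C u = C 4 * C a := by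
      rw [← map_ofNat (C : ZMod p →+* (ZMod p)[X]) 27, ← C_mul, ← C_mul, h27u]
    rw [mul_sub, ← h1, ← map_ofNat (C : ZMod p →+* (ZMod p)[X]) 4]
    ring
  have hirr : Irreducible (4 * (X ^ 2 : (ZMod p)[X]) ^ 3 - 27 * C u) := by
    rw [heq, irreducible_isUnit_mul (isUnit_C.mpr (isUnit_iff_ne_zero.mpr h4))]
    exact h6
  have hdeg : (4 * (X ^ 2 : (ZMod p)[X]) ^ 3 - 27 * C u).natDegree = 6 := by
    rw [heq, natDegree_C_mul h4, natDegree_X_pow_sub_C]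
  refine ⟨u, X ^ 2, hu0, monic_X_pow 2, by simp, by simp, hirr, ?_⟩
  rintro ⟨g, hg⟩
  set q : (ZMod p)[X] := 4 * (X ^ 2 : (ZMod p)[X]) ^ 3 - 27 * C u with hq_def
  have hq0 : q ≠ 0 := hirr.ne_zero
  -- g is integral over the polynomial ring, hence a polynomial
  have hint : IsIntegral (ZMod p)[X] g := by
    refine ⟨X ^ 2 - Polynomial.C (C u ^ 3 * q), monic_X_pow_sub_C _ two_ne_zero, ?_⟩
    simp [eval₂_sub, hg]
  obtain ⟨h, hh⟩ := IsIntegrallyClosed.isIntegral_iff.mp hint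
  have hh2 : h ^ 2 = C u ^ 3 * q := by
    apply IsFractionRing.injective (ZMod p)[X] (RatFunc (ZMod p))
    rw [map_pow, hh, hg]
  have hprime : Prime q := hirr.prime
  have hqdvd : q ∣ h := hprime.dvd_of_dvd_pow (hh2 ▸ dvd_mul_left q (C u ^ 3))
  obtain ⟨r, hr⟩ := hqdvd
  rw [hr, mul_pow] at hh2
  have hcancel : q * r ^ 2 = C u ^ 3 := by
    apply mul_left_cancel₀ hq0
    rw [← mul_assoc, ← sq, hh2]
    ring
  have : q ∣ C u ^ 3 := ⟨r ^ 2, hcancel.symm⟩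
  have hle := natDegree_le_of_dvd this (by
    simpa using pow_ne_zero 3 (fun h0 => hu0 (C_eq_zero.mp h0)))
  rw [hdeg] at hle
  simp [natDegree_pow] at hle
end
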